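/- arXiv:2505.14879 — 4 statements merged into one kernel-verified Lean document; each statement's English description precedes it below -/
import Mathlib

section
/- Let K be a Markov kernel on H with invariant measure π, c : H → ℝ bounded, 0 ≤ β < 1, and S a closed subspace of L²(π) with orthogonal projection Π. Let T f (h) = c(h) + β ∫ f(h₁) K(h, dh₁), let J* be the unique fixed point of T in L²(π), and let V be the unique fixed point of Π ∘ T. Then ‖J* − V‖₂ ≤ (1/(1−β)) ‖J* − Π J*‖₂. -/
/-!
`J* - V` splits as `(J* - Π J*) + (Π J* - V)`, and since `J* = T J*`, `V = Π (T V)` and `Π` is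
1-Lipschitz, `‖Π J* - V‖ ≤ ‖T J* - T V‖ ≤ β ‖J* - V‖`. The contraction property of `T` is Jensen's
inequality `|∫ f dK(h)|² ≤ ∫ f² dK(h)` integrated against `π`, using the invariance `π K = π`.
-/

open MeasureTheory ProbabilityTheory
open scoped ENNReal

theorem dist_le_div_of_isFixedPt_comp {X : Type*} [PseudoMetricSpace X] {T P : X → X} {β : ℝ}
    (hβ : β < 1) (hT : ∀ x y, dist (T x) (T y) ≤ β * dist x y)
    (hP : ∀ x y, dist (P x) (P y) ≤ dist x y) {J V : X} (hJ : T J = J) (hV : P (T V) = V) :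
    dist J V ≤ dist J (P J) / (1 - β) := by
  have hstep : dist (P J) V ≤ β * dist J V :=
    calc dist (P J) V = dist (P (T J)) (P (T V)) := by rw [hJ, hV]
      _ ≤ dist (T J) (T V) := hP _ _
      _ ≤ β * dist J V := hT _ _
  rw [le_div_iff₀ (by linarith)]
  linarith [dist_triangle J (P J) V]

section NearestPoint

variable {F : Type*} [NormedAddCommGroup F] [InnerProductSpace ℝ F] {S : Submodule ℝ F}
  {P : F → F}

theorem inner_sub_eq_zero_of_isNearest (hPmem : ∀ f, P f ∈ S)
    (hPproj : ∀ f, ∀ s ∈ S, ‖f - P f‖ ≤ ‖f - s‖) (f : F) {s : F} (hs : s ∈ S) :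
    inner ℝ (f - P f) s = 0 := by
  refine (Submodule.norm_eq_iInf_iff_real_inner_eq_zero S (hPmem f)).1 ?_ s hs
  have hbdd : BddBelow (Set.range fun t : (S : Set F) ↦ ‖f - t‖) :=
    ⟨0, by rintro _ ⟨t, rfl⟩; exact norm_nonneg _⟩
  exact le_antisymm (le_ciInf fun t ↦ hPproj f t t.2) (ciInf_le hbdd ⟨P f, hPmem f⟩)

theorem norm_sub_le_of_isNearest (hPmem : ∀ f, P f ∈ S)
    (hPproj : ∀ f, ∀ s ∈ S, ‖f - P f‖ ≤ ‖f - s‖) (a b : F) :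
    ‖P a - P b‖ ≤ ‖a - b‖ := by
  have hd : P a - P b ∈ S := S.sub_mem (hPmem a) (hPmem b)
  have horth (f : F) := inner_sub_eq_zero_of_isNearest hPmem hPproj f hd
  -- `a - b` differs from `P a - P b` by a vector orthogonal to `S`
  have hsq : ‖P a - P b‖ ^ 2 = inner ℝ (a - b) (P a - P b) := by
    have hab : a - b = (a - P a) - (b - P b) + (P a - P b) := by abel
    rw [hab, inner_add_left, inner_sub_left, horth a, horth b, real_inner_self_eq_norm_sq]
    ring
  have hle : ‖P a - P b‖ ^ 2 ≤ ‖a - b‖ * ‖P a - P b‖ := hsq ▸ real_inner_le_norm _ _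
  nlinarith [norm_nonneg (P a - P b), norm_nonneg (a - b)]

end NearestPoint

section MarkovOperator

variable {α β E : Type*} [MeasurableSpace α] [MeasurableSpace β]
  [NormedAddCommGroup E] [NormedSpace ℝ E] {p : ℝ≥0∞}

theorem enorm_integral_rpow_le_lintegral (ν : Measure β) [IsProbabilityMeasure ν] {f : β → E}
    (hf : AEStronglyMeasurable f ν) (hp1 : 1 ≤ p) (hp : p ≠ ∞) :
    ‖∫ y, f y ∂ν‖ₑ ^ p.toReal ≤ ∫⁻ y, ‖f y‖ₑ ^ p.toReal ∂ν := by
  have h : ‖∫ y, f y ∂ν‖ₑ ≤ eLpNorm f p ν :=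
    calc ‖∫ y, f y ∂ν‖ₑ ≤ eLpNorm f 1 ν := by
          rw [eLpNorm_one_eq_lintegral_enorm]; exact enorm_integral_le_lintegral_enorm f
      _ ≤ eLpNorm f p ν := eLpNorm_le_eLpNorm_of_exponent_le hp1 hf
  rw [eLpNorm_eq_lintegral_rpow_enorm_toReal (by positivity) hp, one_div] at h
  exact (ENNReal.le_rpow_inv_iff (ENNReal.toReal_pos (by positivity) hp)).1 h

namespace ProbabilityTheory.Kernel

theorem eLpNorm_integral_le_of_stronglyMeasurable (κ : Kernel α β) [IsMarkovKernel κ]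
    (μ : Measure α) {f : β → E} (hf : StronglyMeasurable f) (hp1 : 1 ≤ p) (hp : p ≠ ∞) :
    eLpNorm (fun x ↦ ∫ y, f y ∂κ x) p μ ≤ eLpNorm f p (κ ∘ₘ μ) := by
  have hp0 : p ≠ 0 := by positivity
  rw [eLpNorm_eq_lintegral_rpow_enorm_toReal hp0 hp, eLpNorm_eq_lintegral_rpow_enorm_toReal hp0 hp,
    Measure.lintegral_bind κ.aemeasurable (hf.enorm.pow_const _).aemeasurable]
  gcongr with x
  exact enorm_integral_rpow_le_lintegral (κ x) hf.aestronglyMeasurable hp1 hp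

theorem eLpNorm_integral_le (κ : Kernel α β) [IsMarkovKernel κ] (μ : Measure α) {f : β → E}
    (hf : AEStronglyMeasurable f (κ ∘ₘ μ)) (hp1 : 1 ≤ p) (hp : p ≠ ∞) :
    eLpNorm (fun x ↦ ∫ y, f y ∂κ x) p μ ≤ eLpNorm f p (κ ∘ₘ μ) := by
  have h : (fun x ↦ ∫ y, f y ∂κ x) =ᵐ[μ] fun x ↦ ∫ y, hf.mk f y ∂κ x := by
    filter_upwards [Measure.ae_ae_of_ae_comp hf.ae_eq_mk] with x hx using integral_congr_ae hx
  rw [eLpNorm_congr_ae h, eLpNorm_congr_ae hf.ae_eq_mk]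
  exact eLpNorm_integral_le_of_stronglyMeasurable κ μ hf.stronglyMeasurable_mk hp1 hp

variable (κ : Kernel α α) {μ : Measure α} [IsFiniteMeasure μ] [Fact (1 ≤ p)]

theorem ae_integral_sub_of_comp_eq (hinv : κ ∘ₘ μ = μ) (f g : Lp E p μ) :
    ∀ᵐ x ∂μ, ∫ y, (f - g) y ∂κ x = ∫ y, f y ∂κ x - ∫ y, g y ∂κ x := by
  have hint (h : Lp E p μ) : ∀ᵐ x ∂μ, Integrable h (κ x) := by
    refine Measure.ae_integrable_of_integrable_comp ?_
    rw [hinv]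
    exact (Lp.memLp h).integrable Fact.out
  have hsub : ⇑(f - g) =ᵐ[κ ∘ₘ μ] ⇑f - ⇑g := by
    rw [hinv]
    exact Lp.coeFn_sub f g
  filter_upwards [hint f, hint g, Measure.ae_ae_of_ae_comp hsub] with x hf hg hsubx
  rw [integral_congr_ae hsubx, integral_sub' hf hg]

theorem norm_sub_le_of_ae_eq_add_smul_integral [IsMarkovKernel κ] (hinv : κ ∘ₘ μ = μ)
    (hp : p ≠ ∞) (c : α → E) {β : ℝ} (hβ : 0 ≤ β) {T : Lp E p μ → Lp E p μ}
    (hT : ∀ f, T f =ᵐ[μ] fun x ↦ c x + β • ∫ y, f y ∂κ x) (f g : Lp E p μ) :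
    ‖T f - T g‖ ≤ β * ‖f - g‖ := by
  have hdiff : ⇑(T f - T g) =ᵐ[μ] β • fun x ↦ ∫ y, (f - g) y ∂κ x := by
    filter_upwards [Lp.coeFn_sub (T f) (T g), hT f, hT g, ae_integral_sub_of_comp_eq κ hinv f g]
      with x hTfg hTf hTg hfg
    simp only [hTfg, Pi.sub_apply, hTf, hTg, hfg, Pi.smul_apply, smul_sub]
    abel
  have hmarkov : eLpNorm (fun x ↦ ∫ y, (f - g) y ∂κ x) p μ ≤ eLpNorm (f - g) p μ := by
    have hfg : AEStronglyMeasurable (f - g) (κ ∘ₘ μ) := by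
      rw [hinv]
      exact Lp.aestronglyMeasurable _
    have h := κ.eLpNorm_integral_le μ hfg Fact.out hp
    rwa [hinv] at h
  have h : ‖T f - T g‖ₑ ≤ ‖β • (f - g)‖ₑ := by
    rw [Lp.enorm_def, Lp.enorm_def, eLpNorm_congr_ae hdiff, eLpNorm_congr_ae (Lp.coeFn_smul _ _),
      eLpNorm_const_smul, eLpNorm_const_smul]
    gcongr
  rwa [enorm_le_iff_norm_le, norm_smul, Real.norm_of_nonneg hβ] at h

end ProbabilityTheory.Kernel

end MarkovOperator

theorem stmt3_general {H : Type*} [MeasurableSpace H] (K : Kernel H H) [IsMarkovKernel K]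
    (π : Measure H) [IsProbabilityMeasure π]
    (hinv : π.bind (fun h => K h) = π)
    (c : H → ℝ)
    (β : ℝ) (hβ0 : 0 ≤ β) (hβ1 : β < 1)
    (T : Lp ℝ 2 π → Lp ℝ 2 π)
    (hT : ∀ f : Lp ℝ 2 π, (T f : H → ℝ) =ᵐ[π] fun h => c h + β * ∫ x, f x ∂(K h))
    (S : Submodule ℝ (Lp ℝ 2 π))
    (P : Lp ℝ 2 π → Lp ℝ 2 π)
    (hPmem : ∀ f, P f ∈ S)
    (hPproj : ∀ f, ∀ s ∈ S, ‖f - P f‖ ≤ ‖f - s‖)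
    (Jstar V : Lp ℝ 2 π) (hJ : T Jstar = Jstar) (hV : P (T V) = V) :
    ‖Jstar - V‖ ≤ (1 / (1 - β)) * ‖Jstar - P Jstar‖ := by
  have hTcontr (f g : Lp ℝ 2 π) : dist (T f) (T g) ≤ β * dist f g := by
    simpa only [dist_eq_norm] using
      K.norm_sub_le_of_ae_eq_add_smul_integral hinv ENNReal.ofNat_ne_top c hβ0 hT f g
  have hPnonexp (f g : Lp ℝ 2 π) : dist (P f) (P g) ≤ dist f g := by
    simpa only [dist_eq_norm] using norm_sub_le_of_isNearest hPmem hPproj f g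
  have h := dist_le_div_of_isFixedPt_comp hβ1 hTcontr hPnonexp hJ hV
  rwa [dist_eq_norm, dist_eq_norm, ← one_div_mul_eq_div] at h

/-- With `K` a Markov kernel with invariant probability measure `π`, `c` bounded,
`0 ≤ β < 1`, `T f = c + β ∫ f dK` (as an operator on `L²(π)`), `J*` the fixed point of `T`,
`P` the orthogonal projection onto a closed subspace `S`, and `V` the fixed point of `P ∘ T`,
we have `‖J* − V‖₂ ≤ (1/(1−β)) ‖J* − P J*‖₂`. -/
theorem stmt3 {H : Type*} [MeasurableSpace H] (K : Kernel H H) [IsMarkovKernel K]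
    (π : Measure H) [IsProbabilityMeasure π]
    (hinv : π.bind (fun h => K h) = π)
    (c : H → ℝ) (hc : Measurable c) (C : ℝ) (hcb : ∀ h, |c h| ≤ C)
    (β : ℝ) (hβ0 : 0 ≤ β) (hβ1 : β < 1)
    (T : Lp ℝ 2 π → Lp ℝ 2 π)
    (hT : ∀ f : Lp ℝ 2 π, (T f : H → ℝ) =ᵐ[π] fun h => c h + β * ∫ x, f x ∂(K h))
    (S : Submodule ℝ (Lp ℝ 2 π)) (hS : IsClosed (S : Set (Lp ℝ 2 π)))
    (P : Lp ℝ 2 π → Lp ℝ 2 π)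
    (hPmem : ∀ f, P f ∈ S)
    (hPproj : ∀ f, ∀ s ∈ S, ‖f - P f‖ ≤ ‖f - s‖)
    (Jstar V : Lp ℝ 2 π) (hJ : T Jstar = Jstar) (hV : P (T V) = V) :
    ‖Jstar - V‖ ≤ (1 / (1 - β)) * ‖Jstar - P Jstar‖ :=
  stmt3_general K π hinv c β hβ0 hβ1 T hT S P hPmem hPproj Jstar V hJ hV
end

section
/- Let π be a probability measure on H, let φ¹, …, φᵈ : H → ℝ be linearly independent elements of L²(π) with ‖φⁱ‖_∞ ≤ 1, and let Π be the orthogonal projection of L²(π) onto span{φ¹,…,φᵈ}. Suppose J ∈ L∞ and there exist θ̂ ∈ ℝᵈ and λ < ∞ with ‖J − θ̂ᵀΦ‖_∞ ≤ λ, where Φ = (φ¹,…,φᵈ). Let θ* ∈ ℝᵈ satisfy ‖J − θ*ᵀΦ‖₂ ≤ (1/(1−β)) ‖J − Π J‖₂ for some β ∈ [0,1). Let σ_min > 0 be the minimum eigenvalue of the Gram matrix E_π[Φ Φᵀ]. Then ‖J − θ*ᵀΦ‖_∞ ≤ λ (1 + ((2−β)/(1−β)) √(d/σ_min)). -/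
/-!
Write `θ* = θ̂ + v`. Pointwise, `|J - θ*ᵀΦ| ≤ |J - θ̂ᵀΦ| + |vᵀΦ| ≤ λ + √d ‖v‖` because `|φⁱ| ≤ 1`,
so everything reduces to bounding the coefficient error `v`. The Gram bound gives
`√σ_min ‖v‖ ≤ ‖vᵀΦ‖₂`, and `vᵀΦ` is the difference of the two residuals `J - θ̂ᵀΦ` and `J - θ*ᵀΦ`,
whose `L²(π)` norms are at most `λ` and `λ / (1 - β)`: the sup norm dominates the `L²(π)` norm,
and the projection residual `J - ΠJ` is no larger than `J - θ̂ᵀΦ`.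
-/

open MeasureTheory Finset

section L2Seminorm

variable {Ω : Type*} [MeasurableSpace Ω] {μ : Measure Ω}

lemma MeasureTheory.MemLp.norm_toLp_eq_sqrt_integral_sq {f : Ω → ℝ} (hf : MemLp f 2 μ) :
    ‖hf.toLp f‖ = √(∫ x, f x ^ 2 ∂μ) := by
  rw [Lp.norm_toLp, hf.eLpNorm_eq_integral_rpow_norm two_ne_zero ENNReal.ofNat_ne_top,
    ENNReal.toReal_ofReal (by positivity)]
  norm_num [Real.sqrt_eq_rpow]

lemma sqrt_integral_sq_sub_le {f g : Ω → ℝ} (hf : MemLp f 2 μ) (hg : MemLp g 2 μ) :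
    √(∫ x, (f x - g x) ^ 2 ∂μ) ≤ √(∫ x, f x ^ 2 ∂μ) + √(∫ x, g x ^ 2 ∂μ) := by
  calc √(∫ x, (f x - g x) ^ 2 ∂μ) = ‖hf.toLp f - hg.toLp g‖ := by
        rw [← MemLp.toLp_sub, (hf.sub hg).norm_toLp_eq_sqrt_integral_sq, Pi.sub_def]
    _ ≤ ‖hf.toLp f‖ + ‖hg.toLp g‖ := norm_sub_le _ _
    _ = √(∫ x, f x ^ 2 ∂μ) + √(∫ x, g x ^ 2 ∂μ) := by
        rw [hf.norm_toLp_eq_sqrt_integral_sq, hg.norm_toLp_eq_sqrt_integral_sq]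

lemma sqrt_integral_sq_le_of_abs_le [IsProbabilityMeasure μ] {f : Ω → ℝ} {c : ℝ}
    (hf : ∀ x, |f x| ≤ c) : √(∫ x, f x ^ 2 ∂μ) ≤ c := by
  have hc : 0 ≤ c := (abs_nonneg _).trans (hf (nonempty_of_isProbabilityMeasure μ).some)
  have hsq : ∫ x, f x ^ 2 ∂μ ≤ c ^ 2 := by
    calc ∫ x, f x ^ 2 ∂μ ≤ ∫ _, c ^ 2 ∂μ :=
          integral_mono_of_nonneg (ae_of_all _ fun x => sq_nonneg _) (integrable_const _)
            (ae_of_all _ fun x => sq_le_sq' (abs_le.mp (hf x)).1 (abs_le.mp (hf x)).2)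
      _ = c ^ 2 := by simp
  simpa [Real.sqrt_sq hc] using Real.sqrt_le_sqrt hsq

end L2Seminorm

section Gram

variable {Ω ι : Type*} [MeasurableSpace Ω] {μ : Measure Ω} [Fintype ι]

lemma integral_sq_sum_mul_eq_gram {φ : ι → Ω → ℝ} (hφ : ∀ i, MemLp (φ i) 2 μ) (v : ι → ℝ) :
    ∫ x, (∑ i, v i * φ i x) ^ 2 ∂μ = ∑ i, ∑ j, v i * v j * ∫ x, φ i x * φ j x ∂μ := by
  have hint : ∀ i j, Integrable (fun x => v i * v j * (φ i x * φ j x)) μ := fun i j =>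
    ((hφ i).integrable_mul (hφ j)).const_mul _
  have hexpand : ∀ x, (∑ i, v i * φ i x) ^ 2 = ∑ i, ∑ j, v i * v j * (φ i x * φ j x) := by
    intro x
    simp only [sq, sum_mul_sum]
    exact sum_congr rfl fun i _ => sum_congr rfl fun j _ => by ring
  simp_rw [hexpand]
  rw [integral_finsetSum _ fun i _ => integrable_finsetSum _ fun j _ => hint i j]
  refine sum_congr rfl fun i _ => ?_
  rw [integral_finsetSum _ fun j _ => hint i j]
  exact sum_congr rfl fun j _ => integral_const_mul _ _

lemma sqrt_mul_sqrt_sum_sq_le_of_gram {φ : ι → Ω → ℝ} (hφ : ∀ i, MemLp (φ i) 2 μ) {σ : ℝ}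
    (hσ : ∀ v : ι → ℝ, σ * ∑ i, v i ^ 2 ≤ ∑ i, ∑ j, v i * v j * ∫ x, φ i x * φ j x ∂μ)
    (v : ι → ℝ) : √σ * √(∑ i, v i ^ 2) ≤ √(∫ x, (∑ i, v i * φ i x) ^ 2 ∂μ) := by
  rw [← Real.sqrt_mul' _ (sum_nonneg fun i _ => sq_nonneg (v i)),
    integral_sq_sum_mul_eq_gram hφ]
  exact Real.sqrt_le_sqrt (hσ v)

lemma sqrt_mul_sqrt_sum_sq_sub_le_of_gram {φ : ι → Ω → ℝ} (hφ : ∀ i, MemLp (φ i) 2 μ) {σ : ℝ}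
    (hσ : ∀ v : ι → ℝ, σ * ∑ i, v i ^ 2 ≤ ∑ i, ∑ j, v i * v j * ∫ x, φ i x * φ j x ∂μ)
    (f : Ω → ℝ) (θ θ' : ι → ℝ) (hf : MemLp (fun x => f x - ∑ i, θ i * φ i x) 2 μ) :
    √σ * √(∑ i, (θ' - θ) i ^ 2) ≤
      √(∫ x, (f x - ∑ i, θ i * φ i x) ^ 2 ∂μ) + √(∫ x, (f x - ∑ i, θ' i * φ i x) ^ 2 ∂μ) := by
  have hresidual : ∀ x, ∑ i, (θ' - θ) i * φ i x =
      (f x - ∑ i, θ i * φ i x) - (f x - ∑ i, θ' i * φ i x) := fun x => by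
    simp only [Pi.sub_apply, sub_mul, sum_sub_distrib]
    ring
  have hcomb : MemLp (fun x => ∑ i, (θ' - θ) i * φ i x) 2 μ :=
    memLp_finsetSum _ fun i _ => (hφ i).const_mul _
  have hf' : MemLp (fun x => f x - ∑ i, θ' i * φ i x) 2 μ := by
    convert hf.sub hcomb using 1
    funext x
    rw [Pi.sub_apply, hresidual]
    ring
  calc _ ≤ √(∫ x, (∑ i, (θ' - θ) i * φ i x) ^ 2 ∂μ) := sqrt_mul_sqrt_sum_sq_le_of_gram hφ hσ _
    _ = √(∫ x, ((f x - ∑ i, θ i * φ i x) - (f x - ∑ i, θ' i * φ i x)) ^ 2 ∂μ) := by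
        simp only [hresidual]
    _ ≤ _ := sqrt_integral_sq_sub_le hf hf'

end Gram

lemma abs_sum_mul_le_sqrt_sum_sq_mul_sqrt_card {ι : Type*} [Fintype ι] (v y : ι → ℝ)
    (hy : ∀ i, |y i| ≤ 1) : |∑ i, v i * y i| ≤ √(∑ i, v i ^ 2) * √(Fintype.card ι) := by
  calc |∑ i, v i * y i| ≤ ∑ i, |v i| * |y i| := by
        simpa only [abs_mul] using abs_sum_le_sum_abs (fun i => v i * y i) univ
    _ ≤ √(∑ i, |v i| ^ 2) * √(∑ i, |y i| ^ 2) := Real.sum_mul_le_sqrt_mul_sqrt _ _ _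
    _ ≤ √(∑ i, v i ^ 2) * √(Fintype.card ι) := by
        simp only [sq_abs]
        gcongr
        calc ∑ i, y i ^ 2 ≤ ∑ _ : ι, (1 : ℝ) :=
              sum_le_sum fun i _ => (sq_le_one_iff_abs_le_one _).mpr (hy i)
          _ = Fintype.card ι := by simp

lemma abs_sub_sum_mul_le_add {ι : Type*} [Fintype ι] (φ : ι → ℝ) (hφ : ∀ i, |φ i| ≤ 1)
    (c : ℝ) (θ θ' : ι → ℝ) :
    |c - ∑ i, θ' i * φ i| ≤ |c - ∑ i, θ i * φ i| + √(∑ i, (θ' - θ) i ^ 2) * √(Fintype.card ι) :=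
  calc |c - ∑ i, θ' i * φ i| = |(c - ∑ i, θ i * φ i) - ∑ i, (θ' - θ) i * φ i| := by
        simp only [Pi.sub_apply, sub_mul, sum_sub_distrib]
        ring_nf
    _ ≤ |c - ∑ i, θ i * φ i| + |∑ i, (θ' - θ) i * φ i| := abs_sub _ _
    _ ≤ _ := by grw [abs_sum_mul_le_sqrt_sum_sq_mul_sqrt_card _ _ hφ]

theorem stmt4_general {H : Type*} [MeasurableSpace H] (π : Measure H) [IsProbabilityMeasure π]
    {d : ℕ} (φ : Fin d → H → ℝ) (hφm : ∀ i, Measurable (φ i)) (hφb : ∀ i h, |φ i h| ≤ 1)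
    (J : H → ℝ) (hJm : Measurable J)
    (θhat : Fin d → ℝ) (lam : ℝ)
    (hlam : ∀ h, |J h - ∑ i, θhat i * φ i h| ≤ lam)
    (g : H → ℝ)
    (hgbest : ∀ θ : Fin d → ℝ,
      ∫ h, (J h - g h) ^ 2 ∂π ≤ ∫ h, (J h - ∑ i, θ i * φ i h) ^ 2 ∂π)
    (β : ℝ) (hβ1 : β < 1)
    (θstar : Fin d → ℝ)
    (hθstar : Real.sqrt (∫ h, (J h - ∑ i, θstar i * φ i h) ^ 2 ∂π) ≤
      (1 / (1 - β)) * Real.sqrt (∫ h, (J h - g h) ^ 2 ∂π))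
    (σmin : ℝ) (hσpos : 0 < σmin)
    (hσ : ∀ v : Fin d → ℝ,
      σmin * ∑ i, (v i) ^ 2 ≤ ∑ i, ∑ j, v i * v j * ∫ h, φ i h * φ j h ∂π) :
    ∀ h, |J h - ∑ i, θstar i * φ i h| ≤
      lam * (1 + ((2 - β) / (1 - β)) * Real.sqrt (d / σmin)) := by
  intro x
  set v := θstar - θhat
  have hβ : 0 < 1 - β := by linarith
  have hφL2 : ∀ i, MemLp (φ i) 2 π := fun i =>
    MemLp.of_bound (hφm i).aestronglyMeasurable 1 (ae_of_all _ (hφb i))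
  have hb : √(∫ h, (J h - ∑ i, θhat i * φ i h) ^ 2 ∂π) ≤ lam :=
    sqrt_integral_sq_le_of_abs_le hlam
  have ha : √(∫ h, (J h - ∑ i, θstar i * φ i h) ^ 2 ∂π) ≤ lam / (1 - β) :=
    calc _ ≤ 1 / (1 - β) * √(∫ h, (J h - g h) ^ 2 ∂π) := hθstar
      _ ≤ 1 / (1 - β) * lam := by
        gcongr
        exact (Real.sqrt_le_sqrt (hgbest θhat)).trans hb
      _ = lam / (1 - β) := by ring
  have hv : √σmin * √(∑ i, v i ^ 2) ≤ lam * (2 - β) / (1 - β) :=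
    calc _ ≤ _ := sqrt_mul_sqrt_sum_sq_sub_le_of_gram hφL2 hσ J θhat θstar
          (MemLp.of_bound (by fun_prop) lam (ae_of_all _ hlam))
      _ ≤ lam + lam / (1 - β) := add_le_add hb ha
      _ = lam * (2 - β) / (1 - β) := by field_simp; ring
  calc |J x - ∑ i, θstar i * φ i x|
        ≤ |J x - ∑ i, θhat i * φ i x| + √(∑ i, v i ^ 2) * √d := by
        simpa only [Fintype.card_fin] using abs_sub_sum_mul_le_add (φ · x) (hφb · x) (J x) θhat θstar
    _ ≤ lam + lam * (2 - β) / (1 - β) / √σmin * √d := by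
        gcongr
        · exact hlam x
        · rw [le_div_iff₀ (Real.sqrt_pos.mpr hσpos)]
          linarith
    _ = lam * (1 + ((2 - β) / (1 - β)) * Real.sqrt (d / σmin)) := by
        rw [Real.sqrt_div (Nat.cast_nonneg d)]
        ring

/-- Uniform error bound for the learned value function. If `J` is within `λ`
of the span of bounded basis functions in sup norm, `θ*` satisfies the `L²(π)` bound
`‖J − θ*ᵀΦ‖₂ ≤ (1/(1−β))‖J − ΠJ‖₂`, and `σ_min > 0` is the minimum eigenvalue of the
Gram matrix, then `‖J − θ*ᵀΦ‖_∞ ≤ λ (1 + ((2−β)/(1−β)) √(d/σ_min))`. -/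
theorem stmt4 {H : Type*} [MeasurableSpace H] (π : Measure H) [IsProbabilityMeasure π]
    {d : ℕ} (φ : Fin d → H → ℝ) (hφm : ∀ i, Measurable (φ i)) (hφb : ∀ i h, |φ i h| ≤ 1)
    (hφ2 : ∀ i, MemLp (φ i) 2 π)
    (hφli : LinearIndependent ℝ fun i => (hφ2 i).toLp (φ i))
    (J : H → ℝ) (hJm : Measurable J) (CJ : ℝ) (hJb : ∀ h, |J h| ≤ CJ)
    (θhat : Fin d → ℝ) (lam : ℝ)
    (hlam : ∀ h, |J h - ∑ i, θhat i * φ i h| ≤ lam)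
    (g : H → ℝ) (θg : Fin d → ℝ) (hg : g = fun h => ∑ i, θg i * φ i h)
    (hgbest : ∀ θ : Fin d → ℝ,
      ∫ h, (J h - g h) ^ 2 ∂π ≤ ∫ h, (J h - ∑ i, θ i * φ i h) ^ 2 ∂π)
    (β : ℝ) (hβ0 : 0 ≤ β) (hβ1 : β < 1)
    (θstar : Fin d → ℝ)
    (hθstar : Real.sqrt (∫ h, (J h - ∑ i, θstar i * φ i h) ^ 2 ∂π) ≤
      (1 / (1 - β)) * Real.sqrt (∫ h, (J h - g h) ^ 2 ∂π))
    (σmin : ℝ) (hσpos : 0 < σmin)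
    (hσ : ∀ v : Fin d → ℝ,
      σmin * ∑ i, (v i) ^ 2 ≤ ∑ i, ∑ j, v i * v j * ∫ h, φ i h * φ j h ∂π) :
    ∀ h, |J h - ∑ i, θstar i * φ i h| ≤
      lam * (1 + ((2 - β) / (1 - β)) * Real.sqrt (d / σmin)) :=
  stmt4_general π φ hφm hφb J hJm θhat lam hlam g hgbest β hβ1 θstar hθstar σmin hσpos hσ
end

section
/- Let X be a Markov chain on a measurable space S whose n-step transition kernel satisfies a Doeblin minorization: there is a nontrivial measure λ with Pⁿ(x, A) ≥ λ(A) for all x ∈ S and measurable A, where λ(S) = ε > 0. Then for any two initial distributions μ, ν, ‖μ P^{kn} − ν P^{kn}‖_{TV} ≤ 2(1 − ε)^k, so the chain has a unique invariant measure and converges to it geometrically in total variation. -/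
/-!
Minorization splits one step of the kernel `κ = Pⁿ` as `κ ∘ₘ μ = R μ + μ(S) • λ`, where the
remainder `R μ` has mass `μ(S) (1 - ε)`. Iterating, `κᵏ ∘ₘ μ` and `κᵏ ∘ₘ ν` share a common part
and differ only by `Rᵏ μ` and `Rᵏ ν`, each of mass `(1 - ε)ᵏ`, which gives the contraction.
The series `∑ₖ Rᵏ λ` has mass `ε ∑ₖ (1 - ε)ᵏ = 1` and is `κ`-invariant; the contraction makes it
the only invariant probability measure of `κ`, and hence also of `P`, because `P` maps it to
another `κ`-invariant probability measure.
-/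

open MeasureTheory ProbabilityTheory

namespace ProbabilityTheory.Kernel

variable {S : Type*} [MeasurableSpace S]

instance isMarkovKernel_pow (κ : Kernel S S) [IsMarkovKernel κ] (n : ℕ) :
    IsMarkovKernel (κ ^ n) := by
  induction n with
  | zero => rw [pow_zero]; exact inferInstanceAs (IsMarkovKernel Kernel.id)
  | succ n ih => rw [pow_succ]; exact IsMarkovKernel.comp _ _

lemma pow_succ_comp (κ : Kernel S S) (m : ℕ) (μ : Measure S) :
    (κ ^ (m + 1)) ∘ₘ μ = (κ ^ m) ∘ₘ (κ ∘ₘ μ) := by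
  rw [pow_succ]; exact Measure.comp_assoc.symm

lemma pow_succ_comp' (κ : Kernel S S) (m : ℕ) (μ : Measure S) :
    (κ ^ (m + 1)) ∘ₘ μ = κ ∘ₘ ((κ ^ m) ∘ₘ μ) := by
  rw [pow_succ']; exact Measure.comp_assoc.symm

lemma iterate_bind_eq_pow_comp (κ : Kernel S S) (m : ℕ) (μ : Measure S) :
    (fun μ : Measure S => μ.bind (fun s => κ s))^[m] μ = (κ ^ m) ∘ₘ μ := by
  induction m with
  | zero => exact Measure.id_comp.symm
  | succ m ih => rw [Function.iterate_succ_apply', ih, pow_succ_comp']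

lemma pow_comp_eq_self_of_comp_eq_self {κ : Kernel S S} {μ : Measure S} (h : κ ∘ₘ μ = μ)
    (m : ℕ) : (κ ^ m) ∘ₘ μ = μ := by
  induction m with
  | zero => exact Measure.id_comp
  | succ m ih => rw [pow_succ_comp, h, ih]

lemma existsUnique_comp_eq_self_of_pow {κ : Kernel S S} [IsMarkovKernel κ] {n : ℕ}
    (h : ∃! π : Measure S, IsProbabilityMeasure π ∧ (κ ^ n) ∘ₘ π = π) :
    ∃! π : Measure S, IsProbabilityMeasure π ∧ κ ∘ₘ π = π := by
  obtain ⟨π, ⟨hπ, hfix⟩, huniq⟩ := h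
  have hstep : κ ∘ₘ π = π :=
    huniq _ ⟨inferInstance, by rw [← pow_succ_comp, pow_succ_comp', hfix]⟩
  exact ⟨π, ⟨hπ, hstep⟩, fun σ ⟨hσ, hσfix⟩ =>
    huniq σ ⟨hσ, pow_comp_eq_self_of_comp_eq_self hσfix n⟩⟩

section Doeblin

variable {κ : Kernel S S} {lam : Measure S}

noncomputable def doeblinRemainder (κ : Kernel S S) (lam μ : Measure S) : Measure S :=
  κ ∘ₘ μ - μ Set.univ • lam

lemma smul_le_comp_of_forall_le (hκ : ∀ x, lam ≤ κ x) (μ : Measure S) :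
    μ Set.univ • lam ≤ κ ∘ₘ μ := by
  refine Measure.le_iff.2 fun s hs => ?_
  rw [Measure.smul_apply, smul_eq_mul, Measure.bind_apply hs κ.aemeasurable, mul_comm,
    ← MeasureTheory.lintegral_const]
  exact lintegral_mono fun x => hκ x s

lemma measure_univ_le_one_of_forall_le [IsMarkovKernel κ] (hκ : ∀ x, lam ≤ κ x) :
    lam Set.univ ≤ 1 := by
  rcases isEmpty_or_nonempty S with hS | ⟨⟨x⟩⟩
  · simp [Set.univ_eq_empty_iff.2 hS]
  · simpa using hκ x Set.univ

instance [IsMarkovKernel κ] (μ : Measure S) [IsFiniteMeasure μ] :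
    IsFiniteMeasure (doeblinRemainder κ lam μ) := by
  unfold doeblinRemainder; infer_instance

lemma comp_eq_doeblinRemainder_add [IsFiniteMeasure lam] (hκ : ∀ x, lam ≤ κ x) (μ : Measure S)
    [IsFiniteMeasure μ] :
    κ ∘ₘ μ = doeblinRemainder κ lam μ + μ Set.univ • lam :=
  have := lam.smul_finite (measure_ne_top μ Set.univ)
  (Measure.sub_add_cancel_of_le (smul_le_comp_of_forall_le hκ μ)).symm

lemma doeblinRemainder_apply_univ [IsMarkovKernel κ] [IsFiniteMeasure lam]
    (hκ : ∀ x, lam ≤ κ x) (μ : Measure S) [IsFiniteMeasure μ] :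
    doeblinRemainder κ lam μ Set.univ = μ Set.univ * (1 - lam Set.univ) := by
  have h := congrArg (· Set.univ) (comp_eq_doeblinRemainder_add hκ μ)
  simp only [Measure.comp_apply_univ, Measure.add_apply, Measure.smul_apply, smul_eq_mul] at h
  rw [ENNReal.mul_sub fun _ _ => measure_ne_top μ _, mul_one]
  exact ENNReal.eq_sub_of_add_eq (by finiteness) h.symm

lemma isFiniteMeasure_iterate_doeblinRemainder (κ : Kernel S S) [IsMarkovKernel κ]
    (lam μ : Measure S) [IsFiniteMeasure μ] (k : ℕ) :
    IsFiniteMeasure ((doeblinRemainder κ lam)^[k] μ) := by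
  induction k with
  | zero => assumption
  | succ k ih => rw [Function.iterate_succ_apply']; infer_instance

lemma iterate_doeblinRemainder_apply_univ [IsMarkovKernel κ] [IsFiniteMeasure lam]
    (hκ : ∀ x, lam ≤ κ x) (μ : Measure S) [IsFiniteMeasure μ] (k : ℕ) :
    (doeblinRemainder κ lam)^[k] μ Set.univ = μ Set.univ * (1 - lam Set.univ) ^ k := by
  induction k with
  | zero => simp
  | succ k ih =>
    have := isFiniteMeasure_iterate_doeblinRemainder κ lam μ k
    rw [Function.iterate_succ_apply', doeblinRemainder_apply_univ hκ, ih, pow_succ, mul_assoc]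

lemma exists_pow_comp_eq_add_iterate_doeblinRemainder [IsMarkovKernel κ] [IsFiniteMeasure lam]
    (hκ : ∀ x, lam ≤ κ x) (μ ν : Measure S) [IsFiniteMeasure μ] [IsFiniteMeasure ν]
    (hμν : μ Set.univ = ν Set.univ) (k : ℕ) :
    ∃ ρ : Measure S, (κ ^ k) ∘ₘ μ = ρ + (doeblinRemainder κ lam)^[k] μ ∧
      (κ ^ k) ∘ₘ ν = ρ + (doeblinRemainder κ lam)^[k] ν := by
  induction k with
  | zero =>
    exact ⟨0, by rw [zero_add]; exact Measure.id_comp, by rw [zero_add]; exact Measure.id_comp⟩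
  | succ k ih =>
    obtain ⟨ρ, hμ, hν⟩ := ih
    have := isFiniteMeasure_iterate_doeblinRemainder κ lam μ k
    have := isFiniteMeasure_iterate_doeblinRemainder κ lam ν k
    refine ⟨κ ∘ₘ ρ + (μ Set.univ * (1 - lam Set.univ) ^ k) • lam, ?_, ?_⟩
    · rw [pow_succ_comp', hμ, Measure.comp_add, comp_eq_doeblinRemainder_add hκ (_^[k] μ),
        iterate_doeblinRemainder_apply_univ hκ, Function.iterate_succ_apply']
      abel
    · rw [pow_succ_comp', hν, Measure.comp_add, comp_eq_doeblinRemainder_add hκ (_^[k] ν),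
        iterate_doeblinRemainder_apply_univ hκ, Function.iterate_succ_apply', hμν]
      abel

theorem abs_toReal_pow_comp_sub_le [IsMarkovKernel κ] [IsFiniteMeasure lam]
    (hκ : ∀ x, lam ≤ κ x) (μ ν : Measure S) [IsProbabilityMeasure μ] [IsProbabilityMeasure ν]
    (k : ℕ) (A : Set S) :
    |(((κ ^ k) ∘ₘ μ) A).toReal - (((κ ^ k) ∘ₘ ν) A).toReal| ≤
      (1 - lam Set.univ).toReal ^ k := by
  obtain ⟨ρ, hμ, hν⟩ := exists_pow_comp_eq_add_iterate_doeblinRemainder hκ μ ν (by simp) k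
  have : IsFiniteMeasure ρ := isFiniteMeasure_of_le _ (hμ ▸ Measure.le_add_right le_rfl)
  set α := (doeblinRemainder κ lam)^[k] μ
  set β := (doeblinRemainder κ lam)^[k] ν
  have := isFiniteMeasure_iterate_doeblinRemainder κ lam μ k
  have := isFiniteMeasure_iterate_doeblinRemainder κ lam ν k
  have hbound : ∀ γ : Measure S, γ Set.univ = (1 - lam Set.univ) ^ k →
      (γ A).toReal ≤ (1 - lam Set.univ).toReal ^ k := fun γ hγ => by
    rw [← ENNReal.toReal_pow, ← hγ]
    exact ENNReal.toReal_mono (hγ ▸ by finiteness) (measure_mono (Set.subset_univ A))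
  have hα := hbound α (by simpa using iterate_doeblinRemainder_apply_univ hκ μ k)
  have hβ := hbound β (by simpa using iterate_doeblinRemainder_apply_univ hκ ν k)
  rw [hμ, hν, Measure.add_apply, Measure.add_apply, ENNReal.toReal_add (by finiteness)
    (by finiteness), ENNReal.toReal_add (by finiteness) (by finiteness), add_sub_add_left_eq_sub]
  exact abs_sub_le_of_nonneg_of_le ENNReal.toReal_nonneg hα ENNReal.toReal_nonneg hβ

theorem eq_of_comp_eq_self_of_forall_le [IsMarkovKernel κ] [IsFiniteMeasure lam]
    (hκ : ∀ x, lam ≤ κ x) (hlam : lam Set.univ ≠ 0) {μ ν : Measure S} [IsProbabilityMeasure μ]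
    [IsProbabilityMeasure ν] (hμ : κ ∘ₘ μ = μ) (hν : κ ∘ₘ ν = ν) : μ = ν := by
  set r := (1 - lam Set.univ).toReal
  have hr1 : r < 1 := by
    simpa using ENNReal.toReal_strict_mono ENNReal.one_ne_top
      (ENNReal.sub_lt_self ENNReal.one_ne_top one_ne_zero hlam)
  ext A _
  have hdist : ∀ k : ℕ, |(μ A).toReal - (ν A).toReal| ≤ r ^ k := fun k => by
    simpa only [pow_comp_eq_self_of_comp_eq_self hμ, pow_comp_eq_self_of_comp_eq_self hν]
      using abs_toReal_pow_comp_sub_le hκ μ ν k A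
  have hzero : |(μ A).toReal - (ν A).toReal| ≤ 0 :=
    ge_of_tendsto (tendsto_pow_atTop_nhds_zero_of_lt_one ENNReal.toReal_nonneg hr1)
      (Filter.Eventually.of_forall hdist)
  exact (ENNReal.toReal_eq_toReal_iff' (measure_ne_top μ A) (measure_ne_top ν A)).1
    (sub_eq_zero.1 (abs_nonpos_iff.1 hzero))

noncomputable def doeblinInvariantMeasure (κ : Kernel S S) (lam : Measure S) : Measure S :=
  Measure.sum fun k => (doeblinRemainder κ lam)^[k] lam

lemma doeblinInvariantMeasure_apply_univ [IsMarkovKernel κ] [IsFiniteMeasure lam]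
    (hκ : ∀ x, lam ≤ κ x) (hlam : lam Set.univ ≠ 0) :
    doeblinInvariantMeasure κ lam Set.univ = 1 := by
  simp only [doeblinInvariantMeasure, Measure.sum_apply _ MeasurableSet.univ,
    iterate_doeblinRemainder_apply_univ hκ, ENNReal.tsum_mul_left, ENNReal.tsum_geometric,
    ENNReal.sub_sub_cancel ENNReal.one_ne_top (measure_univ_le_one_of_forall_le hκ)]
  exact ENNReal.mul_inv_cancel hlam (measure_ne_top lam _)

-- Applying `κ` shifts the series and regenerates its first term `λ`, because the masses of the
-- terms add up to `1`.
lemma comp_doeblinInvariantMeasure [IsMarkovKernel κ] [IsFiniteMeasure lam]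
    (hκ : ∀ x, lam ≤ κ x) (hlam : lam Set.univ ≠ 0) :
    κ ∘ₘ doeblinInvariantMeasure κ lam = doeblinInvariantMeasure κ lam := by
  set m := fun k => (doeblinRemainder κ lam)^[k] lam
  have hsplit : ∀ k, κ ∘ₘ m k = m (k + 1) + m k Set.univ • lam := fun k => by
    have := isFiniteMeasure_iterate_doeblinRemainder κ lam lam k
    simp only [m, Function.iterate_succ_apply']
    exact comp_eq_doeblinRemainder_add hκ _
  have hmass : ∑' k, m k Set.univ = 1 := by
    rw [← doeblinInvariantMeasure_apply_univ hκ hlam, doeblinInvariantMeasure,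
      Measure.sum_apply _ MeasurableSet.univ]
  ext s hs
  calc (κ ∘ₘ doeblinInvariantMeasure κ lam) s = ∑' k, (κ ∘ₘ m k) s := by
        rw [doeblinInvariantMeasure, Measure.bind_sum _ _ κ.aemeasurable,
          Measure.sum_apply _ hs]
    _ = ∑' k, m (k + 1) s + lam s := by
        simp only [hsplit, Measure.add_apply, Measure.smul_apply, smul_eq_mul]
        rw [ENNReal.tsum_add, ENNReal.tsum_mul_right, hmass, one_mul]
    _ = ∑' k, m k s := by
        rw [tsum_eq_zero_add' (f := fun k => m k s) ENNReal.summable, add_comm]; rfl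
    _ = doeblinInvariantMeasure κ lam s := (Measure.sum_apply _ hs).symm

theorem existsUnique_comp_eq_self_of_forall_le [IsMarkovKernel κ] [IsFiniteMeasure lam]
    (hκ : ∀ x, lam ≤ κ x) (hlam : lam Set.univ ≠ 0) :
    ∃! π : Measure S, IsProbabilityMeasure π ∧ κ ∘ₘ π = π := by
  have : IsProbabilityMeasure (doeblinInvariantMeasure κ lam) :=
    ⟨doeblinInvariantMeasure_apply_univ hκ hlam⟩
  exact ⟨_, ⟨this, comp_doeblinInvariantMeasure hκ hlam⟩, fun σ ⟨_, hσ⟩ =>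
    eq_of_comp_eq_self_of_forall_le hκ hlam hσ (comp_doeblinInvariantMeasure hκ hlam)⟩

end Doeblin

end ProbabilityTheory.Kernel

open ProbabilityTheory.Kernel

theorem stmt12_general {S : Type*} [MeasurableSpace S] (P : Kernel S S) [IsMarkovKernel P]
    (n : ℕ) (lam : Measure S) (ε : ℝ) (hε : 0 < ε)
    (hlamtot : lam Set.univ = ENNReal.ofReal ε)
    (hmin : ∀ (x : S) (A : Set S), MeasurableSet A →
      lam A ≤ ((fun μ : Measure S => μ.bind (fun s => P s))^[n] (Measure.dirac x)) A) :
    (∀ μ ν : Measure S, IsProbabilityMeasure μ → IsProbabilityMeasure ν →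
        ∀ (k : ℕ) (A : Set S), MeasurableSet A →
        |(((fun μ : Measure S => μ.bind (fun s => P s))^[k * n] μ) A).toReal -
            (((fun μ : Measure S => μ.bind (fun s => P s))^[k * n] ν) A).toReal| ≤
          (1 - ε) ^ k) ∧
      ∃! πinv : Measure S, IsProbabilityMeasure πinv ∧ πinv.bind (fun s => P s) = πinv := by
  simp only [iterate_bind_eq_pow_comp] at hmin ⊢
  have hminorize : ∀ x, lam ≤ (P ^ n) x := fun x => Measure.le_iff.2 fun A hA => by
    simpa [Measure.dirac_bind (P ^ n).measurable] using hmin x A hA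
  have : IsFiniteMeasure lam := ⟨by simp [hlamtot]⟩
  have hlam : lam Set.univ ≠ 0 := by simpa [hlamtot] using hε
  have hε1 : ε ≤ 1 :=
    ENNReal.ofReal_le_one.1 (hlamtot ▸ measure_univ_le_one_of_forall_le hminorize)
  have hrate : (1 - lam Set.univ).toReal = 1 - ε := by
    rw [hlamtot, ENNReal.toReal_sub_of_le (by simpa using hε1) ENNReal.one_ne_top,
      ENNReal.toReal_one, ENNReal.toReal_ofReal hε.le]
  refine ⟨fun μ ν _ _ k A _ => ?_,
    existsUnique_comp_eq_self_of_pow (existsUnique_comp_eq_self_of_forall_le hminorize hlam)⟩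
  rw [pow_mul', ← hrate]
  exact abs_toReal_pow_comp_sub_le hminorize μ ν k A

/-- Doeblin minorization. If the `n`-step kernel satisfies
`Pⁿ(x, ·) ≥ λ(·)` with `λ(S) = ε > 0`, then for any two initial probability
distributions the `kn`-step distributions satisfy
`|μP^{kn}(A) − νP^{kn}(A)| ≤ (1−ε)^k` for all measurable `A`
(equivalently `‖μP^{kn} − νP^{kn}‖_TV ≤ 2(1−ε)^k`), and there is a unique
invariant probability measure. -/
theorem stmt12 {S : Type*} [MeasurableSpace S] (P : Kernel S S) [IsMarkovKernel P]
    (n : ℕ) (hn : 0 < n) (lam : Measure S) (ε : ℝ) (hε : 0 < ε)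
    (hlamtot : lam Set.univ = ENNReal.ofReal ε)
    (hmin : ∀ (x : S) (A : Set S), MeasurableSet A →
      lam A ≤ ((fun μ : Measure S => μ.bind (fun s => P s))^[n] (Measure.dirac x)) A) :
    (∀ μ ν : Measure S, IsProbabilityMeasure μ → IsProbabilityMeasure ν →
        ∀ (k : ℕ) (A : Set S), MeasurableSet A →
        |(((fun μ : Measure S => μ.bind (fun s => P s))^[k * n] μ) A).toReal -
            (((fun μ : Measure S => μ.bind (fun s => P s))^[k * n] ν) A).toReal| ≤
          (1 - ε) ^ k) ∧
      ∃! πinv : Measure S, IsProbabilityMeasure πinv ∧ πinv.bind (fun s => P s) = πinv :=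
  stmt12_general P n lam ε hε hlamtot hmin
end

section
/- Let π be a probability measure on H, φ¹,…,φᵈ ∈ L²(π) linearly independent, Π the L²(π)-projection onto their span, and T an affine β-contraction on L²(π) of the form Tf = c + βKf where K is a non-expansive linear operator on L²(π). Let θ* correspond to the fixed point of Π∘T. Then for every θ ∈ ℝᵈ with θ ≠ θ*, the inner product ⟨θᵀΦ − θ*ᵀΦ, T(θᵀΦ) − θᵀΦ⟩_{L²(π)} ≤ (β−1)‖θᵀΦ − θ*ᵀΦ‖₂² < 0. -/
open MeasureTheory RealInnerProductSpace

/-! Write `x = θᵀΦ`, `x* = θ*ᵀΦ` and `Π` for the orthogonal projection onto the span `S` of `Φ`.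
Then `T x - x = (T x - Π T x) + (Π T x - Π T x*) - (x - x*)`. The first summand is orthogonal
to `x - x* ∈ S`; the second has norm at most `β ‖x - x*‖`, because `Π` is non-expansive and `T`
is a `β`-contraction, so Cauchy–Schwarz bounds its inner product with `x - x*` by
`β ‖x - x*‖²`. Linear independence of `Φ` makes `x ≠ x*` whenever `θ ≠ θ*`. -/

section BestApproximation

variable {E : Type*} [NormedAddCommGroup E] [InnerProductSpace ℝ E]

theorem Submodule.inner_sub_eq_zero_of_forall_norm_sub_le (K : Submodule ℝ E) {u v : E}
    (hv : v ∈ K) (hbest : ∀ s ∈ K, ‖u - v‖ ≤ ‖u - s‖) : ∀ w ∈ K, ⟪u - v, w⟫ = 0 := by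
  refine (K.norm_eq_iInf_iff_real_inner_eq_zero hv).1
    (le_antisymm (le_ciInf fun w => hbest w w.2) ?_)
  exact ciInf_le ⟨0, by rintro _ ⟨w, rfl⟩; positivity⟩ (⟨v, hv⟩ : (K : Set E))

theorem Submodule.starProjection_eq_of_forall_norm_sub_le (K : Submodule ℝ E)
    [K.HasOrthogonalProjection] {u v : E} (hv : v ∈ K) (hbest : ∀ s ∈ K, ‖u - v‖ ≤ ‖u - s‖) :
    K.starProjection u = v :=
  K.eq_starProjection_of_mem_of_inner_eq_zero hv
    (K.inner_sub_eq_zero_of_forall_norm_sub_le hv hbest)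

theorem Submodule.inner_sub_map_sub_le_of_starProjection_fixed (K : Submodule ℝ E)
    [K.HasOrthogonalProjection] {T : E → E} {β : ℝ} (hT : ∀ f g, ‖T f - T g‖ ≤ β * ‖f - g‖)
    {x xs : E} (hx : x ∈ K) (hxs : xs ∈ K) (hfix : K.starProjection (T xs) = xs) :
    ⟪x - xs, T x - x⟫ ≤ (β - 1) * ‖x - xs‖ ^ 2 := by
  have hmem : x - xs ∈ K := K.sub_mem hx hxs
  have horth : ⟪x - xs, T x - K.starProjection (T x)⟫ = 0 := by
    rw [real_inner_comm]; exact K.starProjection_inner_eq_zero _ _ hmem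
  have hcontr : ‖K.starProjection (T x) - xs‖ ≤ β * ‖x - xs‖ :=
    calc ‖K.starProjection (T x) - xs‖ = ‖K.starProjection (T x - T xs)‖ := by
          rw [map_sub, hfix]
      _ ≤ ‖T x - T xs‖ := K.norm_starProjection_apply_le _
      _ ≤ β * ‖x - xs‖ := hT x xs
  have hsplit : T x - x = (T x - K.starProjection (T x)) + (K.starProjection (T x) - xs)
      - (x - xs) := by abel
  calc ⟪x - xs, T x - x⟫
      = ⟪x - xs, K.starProjection (T x) - xs⟫ - ‖x - xs‖ ^ 2 := by
        rw [hsplit, inner_sub_right, inner_add_right, horth, zero_add,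
          real_inner_self_eq_norm_sq]
    _ ≤ ‖x - xs‖ * (β * ‖x - xs‖) - ‖x - xs‖ ^ 2 := by
        gcongr
        exact (real_inner_le_norm _ _).trans (by gcongr)
    _ = (β - 1) * ‖x - xs‖ ^ 2 := by ring

end BestApproximation

theorem norm_sub_le_of_eq_add_smul {E : Type*} [SeminormedAddCommGroup E] [NormedSpace ℝ E]
    {K : E →L[ℝ] E} (hK : ∀ f, ‖K f‖ ≤ ‖f‖) {c : E} {β : ℝ} (hβ : 0 ≤ β) {T : E → E}
    (hT : ∀ f, T f = c + β • K f) (f g : E) : ‖T f - T g‖ ≤ β * ‖f - g‖ := by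
  rw [hT, hT, add_sub_add_left_eq_sub, ← smul_sub, ← map_sub, norm_smul, Real.norm_of_nonneg hβ]
  gcongr
  exact hK _

theorem stmt15_general {H : Type*} [MeasurableSpace H] (π : Measure H)
    {d : ℕ} (Φ : Fin d → Lp ℝ 2 π) (hΦli : LinearIndependent ℝ Φ)
    (Kop : Lp ℝ 2 π →L[ℝ] Lp ℝ 2 π) (hK : ∀ f, ‖Kop f‖ ≤ ‖f‖)
    (c : Lp ℝ 2 π) (β : ℝ) (hβ0 : 0 ≤ β) (hβ1 : β < 1)
    (T : Lp ℝ 2 π → Lp ℝ 2 π) (hT : ∀ f, T f = c + β • Kop f)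
    (P : Lp ℝ 2 π → Lp ℝ 2 π)
    (hPmem : ∀ f, P f ∈ Submodule.span ℝ (Set.range Φ))
    (hPbest : ∀ f, ∀ s ∈ Submodule.span ℝ (Set.range Φ), ‖f - P f‖ ≤ ‖f - s‖)
    (θs : Fin d → ℝ) (hfix : P (T (∑ i, θs i • Φ i)) = ∑ i, θs i • Φ i) :
    ∀ θ : Fin d → ℝ, θ ≠ θs →
      ⟪(∑ i, θ i • Φ i) - ∑ i, θs i • Φ i, T (∑ i, θ i • Φ i) - ∑ i, θ i • Φ i⟫ ≤
          (β - 1) * ‖(∑ i, θ i • Φ i) - ∑ i, θs i • Φ i‖ ^ 2 ∧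
        (β - 1) * ‖(∑ i, θ i • Φ i) - ∑ i, θs i • Φ i‖ ^ 2 < 0 := by
  intro θ hθ
  set S := Submodule.span ℝ (Set.range Φ)
  have : FiniteDimensional ℝ S := FiniteDimensional.span_of_finite ℝ (Set.finite_range Φ)
  have hP : ∀ f, S.starProjection f = P f := fun f =>
    S.starProjection_eq_of_forall_norm_sub_le (hPmem f) (hPbest f)
  have hcomb_mem : ∀ η : Fin d → ℝ, ∑ i, η i • Φ i ∈ S := fun η =>
    Submodule.sum_mem _ fun i _ => Submodule.smul_mem _ _ (Submodule.subset_span ⟨i, rfl⟩)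
  have hne : ∑ i, θ i • Φ i ≠ ∑ i, θs i • Φ i := by
    simpa only [Fintype.linearCombination_apply] using
      hΦli.fintypeLinearCombination_injective.ne hθ
  refine ⟨S.inner_sub_map_sub_le_of_starProjection_fixed (norm_sub_le_of_eq_add_smul hK hβ0 hT)
    (hcomb_mem θ) (hcomb_mem θs) ((hP _).trans hfix), ?_⟩
  exact mul_neg_of_neg_of_pos (by linarith) (pow_pos (norm_pos_iff.2 (sub_ne_zero.2 hne)) 2)

/-- For an affine `β`-contraction `T f = c + β K f` on `L²(π)` (with `K` a
non-expansive linear operator), `Π` the orthogonal projection onto the span of linearly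
independent `Φ`, and `θ*` corresponding to the fixed point of `Π ∘ T`, for every
`θ ≠ θ*` the inner product `⟪θᵀΦ − θ*ᵀΦ, T(θᵀΦ) − θᵀΦ⟫ ≤ (β−1)‖θᵀΦ − θ*ᵀΦ‖² < 0`. -/
theorem stmt15 {H : Type*} [MeasurableSpace H] (π : Measure H) [IsProbabilityMeasure π]
    {d : ℕ} (Φ : Fin d → Lp ℝ 2 π) (hΦli : LinearIndependent ℝ Φ)
    (Kop : Lp ℝ 2 π →L[ℝ] Lp ℝ 2 π) (hK : ∀ f, ‖Kop f‖ ≤ ‖f‖)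
    (c : Lp ℝ 2 π) (β : ℝ) (hβ0 : 0 ≤ β) (hβ1 : β < 1)
    (T : Lp ℝ 2 π → Lp ℝ 2 π) (hT : ∀ f, T f = c + β • Kop f)
    (P : Lp ℝ 2 π → Lp ℝ 2 π)
    (hPmem : ∀ f, P f ∈ Submodule.span ℝ (Set.range Φ))
    (hPbest : ∀ f, ∀ s ∈ Submodule.span ℝ (Set.range Φ), ‖f - P f‖ ≤ ‖f - s‖)
    (θs : Fin d → ℝ) (hfix : P (T (∑ i, θs i • Φ i)) = ∑ i, θs i • Φ i) :
    ∀ θ : Fin d → ℝ, θ ≠ θs →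
      ⟪(∑ i, θ i • Φ i) - ∑ i, θs i • Φ i, T (∑ i, θ i • Φ i) - ∑ i, θ i • Φ i⟫ ≤
          (β - 1) * ‖(∑ i, θ i • Φ i) - ∑ i, θs i • Φ i‖ ^ 2 ∧
        (β - 1) * ‖(∑ i, θ i • Φ i) - ∑ i, θs i • Φ i‖ ^ 2 < 0 :=
  stmt15_general π Φ hΦli Kop hK c β hβ0 hβ1 T hT P hPmem hPbest θs hfix
end
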